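/- Let T be a triangulated category satisfying the octahedral axiom, P a connective class of objects closed under isomorphisms and finite direct sums containing 0, and I ⊆ P a subclass closed under isomorphisms and finite direct sums containing 0. Fix d ≥ 1 and set A^{(d)} := (P ∗ ΣP ∗ ⋯ ∗ Σ^d P) ∩ { X : Hom_T(X, Σ^m I') = 0 for all I' ∈ I, m ≥ 1 } and A^{(d+1)} := (P ∗ ΣP ∗ ⋯ ∗ Σ^{d+1}P) ∩ the same kernel class. Assume I is covariantly finite in A^{(d)}. Then every object P₀ ∈ P admits d + 1 distinguished triangles Y_k → I_k → Y_{k+1} → ΣY_k for 0 ≤ k ≤ d, with Y_0 = P₀, I_k ∈ I for all k, and Y_{k+1} ∈ A^{(d+1)} for all k. (This expresses that the corresponding extriangulated category has dominant dimension at least d + 1.) -/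

import Mathlib

/-!
Statement 6: if `I` is covariantly finite in `A^{(d)}`, then every `P₀ ∈ P` admits
`d + 1` distinguished triangles `Y_k ⟶ I_k ⟶ Y_{k+1} ⟶ ΣY_k` (`0 ≤ k ≤ d`) with
`Y_0 = P₀`, `I_k ∈ I` and `Y_{k+1} ∈ A^{(d+1)}`: the corresponding extriangulated
category has dominant dimension at least `d + 1`.
-/

open CategoryTheory Limits Pretriangulated

universe v u

namespace AuslanderIyamaStmt6

variable {C : Type u} [Category.{v} C] [HasZeroObject C] [HasShift C ℤ] [Preadditive C]
  [∀ n : ℤ, (shiftFunctor C n).Additive] [Pretriangulated C] [HasBinaryBiproducts C]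

/-- `S₁ ∗ S₂`: objects `Y` fitting in a distinguished triangle `X ⟶ Y ⟶ Z ⟶ X⟦1⟧`
with `X ∈ S₁` and `Z ∈ S₂`. -/
def star (S₁ S₂ : Set C) : Set C :=
  {Y | ∃ (X Z : C) (f : X ⟶ Y) (g : Y ⟶ Z) (h : Z ⟶ X⟦(1 : ℤ)⟧),
    (Triangle.mk f g h ∈ distTriang C) ∧ X ∈ S₁ ∧ Z ∈ S₂}

/-- `Σⁿ S`, closed under isomorphism. -/
def shiftSet (n : ℤ) (S : Set C) : Set C :=
  {X | ∃ Y ∈ S, Nonempty (X ≅ Y⟦n⟧)}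

/-- `V n = P ∗ ΣP ∗ ⋯ ∗ Σⁿ P` (associated to the left; by the octahedral axiom `∗` is
associative so the grouping is irrelevant). -/
def V (P : Set C) : ℕ → Set C
  | 0 => P
  | n + 1 => star (V P n) (shiftSet ((n : ℤ) + 1) P)

/-- The kernel class `{X : Hom(X, Σ^m I') = 0 for all I' ∈ I, m ≥ 1}`. -/
def extKer (I : Set C) : Set C :=
  {X | ∀ I' ∈ I, ∀ m : ℤ, 1 ≤ m → ∀ f : X ⟶ I'⟦m⟧, f = 0}

/-- `I` is covariantly finite in `S`: every `X ∈ S` admits a left `I`-approximation. -/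
def CovFin (I S : Set C) : Prop :=
  ∀ X ∈ S, ∃ I₀ ∈ I, ∃ f : X ⟶ I₀, ∀ I' ∈ I, ∀ g : X ⟶ I', ∃ h : I₀ ⟶ I', f ≫ h = g

/-!
Starting from `Y₀ = P₀`, take a left `I`-approximation `Yₖ ⟶ Iₖ` and let `Yₖ₊₁` be its cone.
Cones of maps from `V P k` to `P` lie in `V P (k + 1)`: if `X ⟶ Yₖ ⟶ Σᵏ P'` is the last step of
the filtration of `Yₖ`, the octahedron on `X ⟶ Yₖ ⟶ Iₖ` exhibits the cone of `Yₖ ⟶ Iₖ` as an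
extension of `Σᵏ⁺¹ P'` by the cone of `X ⟶ Iₖ`, which lies in `V P k` by induction.
A map `Yₖ₊₁ ⟶ Σᵐ I'` (`m ≥ 1`) vanishes on `Iₖ` by connectivity, so it factors through `ΣYₖ`.
For `m ≥ 2` the factor vanishes since `Yₖ ∈ extKer I`; for `m = 1` it is the shift of a map
`Yₖ ⟶ I'`, which factors through the approximation, and `Yₖ₊₁ ⟶ ΣYₖ ⟶ ΣIₖ` is zero.
-/

theorem exists_seq_of_forall_exists_succ {α : Type*} {S : ℕ → α → Prop} {R : α → α → Prop}
    {N : ℕ} {a : α} (h₀ : S 0 a) (hstep : ∀ n < N, ∀ x, S n x → ∃ y, R x y ∧ S (n + 1) y) :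
    ∃ u : ℕ → α, u 0 = a ∧ ∀ k < N, R (u k) (u (k + 1)) ∧ S (k + 1) (u (k + 1)) := by
  have hnext : ∀ n x, ∃ y, n < N → S n x → R x y ∧ S (n + 1) y := by
    intro n x
    by_cases h : n < N ∧ S n x
    · obtain ⟨y, hy⟩ := hstep n h.1 x h.2
      exact ⟨y, fun _ _ => hy⟩
    · exact ⟨x, fun hn hx => absurd ⟨hn, hx⟩ h⟩
  choose next hnext using hnext
  let u : ℕ → α := fun k => Nat.rec a next k
  have hu : ∀ k ≤ N, S k (u k) := by
    intro k hk
    induction k with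
    | zero => exact h₀
    | succ k ih => exact (hnext k (u k) (by omega) (ih (by omega))).2
  exact ⟨u, rfl, fun k hk => hnext k (u k) hk (hu k hk.le)⟩

omit [HasBinaryBiproducts C] in
open ZeroObject in
theorem V_subset_V_succ {P : Set C} (hPzero : ∀ ⦃X : C⦄, IsZero X → X ∈ P) (n : ℕ) :
    V P n ⊆ V P (n + 1) := fun Y hY =>
  ⟨Y, 0, 𝟙 Y, 0, 0, contractible_distinguished Y, hY, 0, hPzero (isZero_zero C),
    ⟨(isZero_zero C).iso ((shiftFunctor C _).map_isZero (isZero_zero C))⟩⟩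

omit [HasBinaryBiproducts C] in
theorem V_monotone {P : Set C} (hPzero : ∀ ⦃X : C⦄, IsZero X → X ∈ P) : Monotone (V P) :=
  monotone_nat_of_le_succ (V_subset_V_succ hPzero)

omit [HasBinaryBiproducts C] in
open Triangulated in
theorem cone_mem_V_succ [IsTriangulated C] {P : Set C} {k : ℕ} {A B Z : C} {f : A ⟶ B}
    {g : B ⟶ Z} {h : Z ⟶ A⟦(1 : ℤ)⟧} (hT : Triangle.mk f g h ∈ distTriang C)
    (hA : A ∈ V P k) (hB : B ∈ P) : Z ∈ V P (k + 1) := by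
  induction k generalizing A Z with
  | zero =>
    exact ⟨B, A⟦(1 : ℤ)⟧, g, h, -f⟦(1 : ℤ)⟧', rot_of_distTriang _ hT, hB, A, hA, ⟨Iso.refl _⟩⟩
  | succ k ih =>
    obtain ⟨X, W, u, p, q, hXAW, hX, Q, hQ, ⟨e⟩⟩ := hA
    obtain ⟨Z', g', h', hXBZ'⟩ := distinguished_cocone_triangle (u ≫ f)
    let O := someOctahedron rfl hXAW hT hXBZ'
    refine ⟨Z', W⟦(1 : ℤ)⟧, O.m₃, h ≫ p⟦(1 : ℤ)⟧', -O.m₁⟦(1 : ℤ)⟧', rot_of_distTriang _ O.mem,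
      ih hXBZ' hX, Q, hQ, ⟨?_⟩⟩
    exact (shiftFunctor C (1 : ℤ)).mapIso e ≪≫
      (shiftFunctorAdd' C ((k : ℤ) + 1) 1 (((k + 1 : ℕ) : ℤ) + 1) (by push_cast; ring)).symm.app Q

omit [HasZeroObject C] [Pretriangulated C] [HasBinaryBiproducts C] in
theorem shift_hom_eq_zero {X Y : C} {m n : ℤ} (hmn : m + 1 = n) (hXY : ∀ t : X ⟶ Y⟦m⟧, t = 0)
    (f : X⟦(1 : ℤ)⟧ ⟶ Y⟦n⟧) : f = 0 := by
  let e := (shiftFunctorAdd' C m 1 n hmn).app Y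
  obtain ⟨t, ht⟩ := (shiftFunctor C (1 : ℤ)).map_surjective (f ≫ e.hom)
  rw [← cancel_mono e.hom, ← ht, hXY t, Functor.map_zero, zero_comp]

omit [HasBinaryBiproducts C] in
theorem cone_mem_extKer {I : Set C} {Y I₀ Z : C} {a : Y ⟶ I₀} {g : I₀ ⟶ Z} {h : Z ⟶ Y⟦(1 : ℤ)⟧}
    (hT : Triangle.mk a g h ∈ distTriang C) (hY : Y ∈ extKer I) (hI₀ : I₀ ∈ extKer I)
    (happrox : ∀ I' ∈ I, ∀ t : Y ⟶ I', ∃ s : I₀ ⟶ I', a ≫ s = t) :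
    Z ∈ extKer I := by
  intro I' hI' m hm f
  obtain ⟨f', rfl⟩ := Triangle.yoneda_exact₃ _ hT f (hI₀ I' hI' m hm _)
  rcases hm.eq_or_lt with rfl | hm
  · obtain ⟨t, rfl⟩ := (shiftFunctor C (1 : ℤ)).map_surjective f'
    obtain ⟨s, rfl⟩ := happrox I' hI' t
    have hzero : h ≫ a⟦(1 : ℤ)⟧' = 0 := comp_distTriang_mor_zero₃₁ _ hT
    change h ≫ (a ≫ s)⟦(1 : ℤ)⟧' = 0
    rw [Functor.map_comp, reassoc_of% hzero, zero_comp]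
  · have hf' : f' = 0 := shift_hom_eq_zero (sub_add_cancel m 1) (hY I' hI' (m - 1) (by omega)) f'
    subst hf'
    exact comp_zero

theorem statement6_general [IsTriangulated C] (d : ℕ) (P I : Set C) (hIP : I ⊆ P)
    (hPzero : ∀ ⦃X : C⦄, IsZero X → X ∈ P)
    (hPconn : ∀ ⦃X Y : C⦄, X ∈ P → Y ∈ P → ∀ n : ℤ, 1 ≤ n → ∀ f : X ⟶ Y⟦n⟧, f = 0)
    (hcov : CovFin I (V P d ∩ extKer I))
    (P₀ : C) (hP₀ : P₀ ∈ P) :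
    ∃ (Y : ℕ → C), Y 0 = P₀ ∧
      ∀ k ≤ d, ∃ Ik ∈ I, ∃ (f : Y k ⟶ Ik) (g : Ik ⟶ Y (k + 1))
        (h : Y (k + 1) ⟶ (Y k)⟦(1 : ℤ)⟧),
        (Triangle.mk f g h ∈ distTriang C) ∧
          Y (k + 1) ∈ V P (d + 1) ∩ extKer I := by
  have hmono := V_monotone hPzero
  have hPker : P ⊆ extKer I := fun X hX I' hI' m hm f => hPconn hX (hIP hI') m hm f
  obtain ⟨Y, hY₀, hY⟩ := exists_seq_of_forall_exists_succ (N := d + 1)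
    (S := fun n X => X ∈ V P n ∩ extKer I)
    (R := fun X Z => ∃ Ik ∈ I, ∃ (f : X ⟶ Ik) (g : Ik ⟶ Z) (h : Z ⟶ X⟦(1 : ℤ)⟧),
      Triangle.mk f g h ∈ distTriang C) ⟨hP₀, hPker hP₀⟩ <| by
    rintro n hn X ⟨hXV, hXK⟩
    obtain ⟨I₀, hI₀, a, happrox⟩ := hcov X ⟨hmono (by omega) hXV, hXK⟩
    obtain ⟨Z, g, h, hT⟩ := distinguished_cocone_triangle a
    exact ⟨Z, ⟨I₀, hI₀, a, g, h, hT⟩, cone_mem_V_succ hT hXV (hIP hI₀),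
      cone_mem_extKer hT hXK (hPker (hIP hI₀)) happrox⟩
  refine ⟨Y, hY₀, fun k hk => ?_⟩
  obtain ⟨⟨Ik, hIk, f, g, h, hT⟩, hV, hK⟩ := hY k (by omega)
  exact ⟨Ik, hIk, f, g, h, hT, hmono (by omega) hV, hK⟩

theorem statement6 [IsTriangulated C] (d : ℕ) (hd : 1 ≤ d) (P I : Set C) (hIP : I ⊆ P)
    (hPiso : ∀ ⦃X Y : C⦄, (X ≅ Y) → X ∈ P → Y ∈ P)
    (hPsum : ∀ ⦃X Y : C⦄, X ∈ P → Y ∈ P → (X ⊞ Y) ∈ P)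
    (hPzero : ∀ ⦃X : C⦄, IsZero X → X ∈ P)
    (hPconn : ∀ ⦃X Y : C⦄, X ∈ P → Y ∈ P → ∀ n : ℤ, 1 ≤ n → ∀ f : X ⟶ Y⟦n⟧, f = 0)
    (hIiso : ∀ ⦃X Y : C⦄, (X ≅ Y) → X ∈ I → Y ∈ I)
    (hIsum : ∀ ⦃X Y : C⦄, X ∈ I → Y ∈ I → (X ⊞ Y) ∈ I)
    (hIzero : ∀ ⦃X : C⦄, IsZero X → X ∈ I)
    (hcov : CovFin I (V P d ∩ extKer I))
    (P₀ : C) (hP₀ : P₀ ∈ P) :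
    ∃ (Y : ℕ → C), Y 0 = P₀ ∧
      ∀ k ≤ d, ∃ Ik ∈ I, ∃ (f : Y k ⟶ Ik) (g : Ik ⟶ Y (k + 1))
        (h : Y (k + 1) ⟶ (Y k)⟦(1 : ℤ)⟧),
        (Triangle.mk f g h ∈ distTriang C) ∧
          Y (k + 1) ∈ V P (d + 1) ∩ extKer I :=
  statement6_general d P I hIP hPzero hPconn hcov P₀ hP₀

end AuslanderIyamaStmt6
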